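/- Proposition (non-l-MSP functions have small alignment after subtracting the reachable part; core of Theorem 3.6). Let P ≥ 1, l ≥ 1, and h* : H_P → ℝ not satisfying l-MSP, and let T ⊆ [P] be such that 𝒮^{⊄T} = {S ⊆ [P] : ĥ*(S) ≠ 0, S ⊄ T} is nonempty and every S ∈ 𝒮^{⊄T} has |S∖T| ≥ l+1. For d ≥ 2P define f* : H_d → ℝ by f*(x) = h*(x_1,…,x_P), and α : H_d → ℝ by α = Σ_{S ⊆ T} ĥ*(S)·χ_S. Let σ be uniform over the permutations of [d] fixing every element of T. Then: (i) ‖f* − α‖²_{L²(H_d)} ≥ min{ ĥ*(S)² : ĥ*(S) ≠ 0 } > 0; and (ii) for every β : H_d → ℝ, E_σ[ ⟨(f* − α)∘σ, β⟩²_{L²(H_d)} ] ≤ 2^P·(2P)^{l+1}·( Σ_{S ∈ 𝒮^{⊄T}} ĥ*(S)² )·‖β‖²_{L²(H_d)} / d^{l+1}. -/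

import Mathlib

open scoped BigOperators

noncomputable section

/-- A Boolean bit viewed as a sign in `{+1, -1}` (`true ↦ +1`). -/
def sgn (b : Bool) : ℝ := if b then 1 else -1

/-- Expectation over the uniform measure on the hypercube `H_d = {+1,-1}^d`. -/
def hcE {d : ℕ} (f : (Fin d → Bool) → ℝ) : ℝ := (∑ x : Fin d → Bool, f x) / 2 ^ d

/-- The parity (Fourier character) `χ_S(x) = ∏_{i∈S} x_i`. -/
def chi {d : ℕ} (S : Finset (Fin d)) (x : Fin d → Bool) : ℝ := ∏ i ∈ S, sgn (x i)

/-- The Fourier coefficient `f̂(S) = E_{x∼H_d}[f(x)χ_S(x)]`. -/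
def fourierCoef {d : ℕ} (f : (Fin d → Bool) → ℝ) (S : Finset (Fin d)) : ℝ :=
  hcE fun x => f x * chi S x

lemma sgn_mul_self (b : Bool) : sgn b * sgn b = 1 := by cases b <;> simp [sgn]

lemma sgn_mul_neg {b c : Bool} (h : b ≠ c) : sgn b * sgn c = -1 := by
  cases b <;> cases c <;> simp_all [sgn]

lemma sgn_not (b : Bool) : sgn (!b) = - sgn b := by cases b <;> simp [sgn]

lemma chi_mul_self {d : ℕ} (A : Finset (Fin d)) (x : Fin d → Bool) :
    chi A x * chi A x = 1 := by
  rw [chi, ← Finset.prod_mul_distrib]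
  exact Finset.prod_eq_one fun i _ => sgn_mul_self _

lemma sum_chi {d : ℕ} (S : Finset (Fin d)) (hS : S ≠ ∅) :
    ∑ x : Fin d → Bool, chi S x = 0 := by
  obtain ⟨a, ha⟩ := Finset.nonempty_iff_ne_empty.2 hS
  apply Finset.sum_ninvolution (g := fun x => Function.update x a (!x a))
  · intro x
    have h1 : chi S (Function.update x a (!x a)) = - chi S x := by
      rw [chi, chi, ← Finset.mul_prod_erase _ _ ha, ← Finset.mul_prod_erase _ _ ha]
      have : ∀ i ∈ S.erase a, sgn (Function.update x a (!x a) i) = sgn (x i) := by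
        intro i hi
        rw [Function.update_of_ne (Finset.ne_of_mem_erase hi)]
      rw [Finset.prod_congr rfl this, Function.update_self, sgn_not]
      ring
    rw [h1]; ring
  · intro x _; simp only [ne_eq, funext_iff, not_forall]
    exact ⟨a, by simp⟩
  · intro x; exact Finset.mem_univ _
  · intro x; funext i
    by_cases hi : i = a
    · subst hi; simp
    · simp [Function.update_of_ne hi]

lemma hcE_chi {d : ℕ} (S : Finset (Fin d)) :
    hcE (chi S) = if S = ∅ then 1 else 0 := by
  by_cases h : S = ∅
  · subst h; simp [hcE, chi]
  · simp [hcE, sum_chi S h, h]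

lemma chi_mul_chi {d : ℕ} (A B : Finset (Fin d)) (x : Fin d → Bool) :
    chi A x * chi B x = chi ((A \ B) ∪ (B \ A)) x := by
  have hA : A = (A \ B) ∪ (A ∩ B) := by
    rw [Finset.sdiff_union_inter]
  have hB : B = (B \ A) ∪ (A ∩ B) := by
    rw [Finset.inter_comm, Finset.sdiff_union_inter]
  have dAB : Disjoint (A \ B) (A ∩ B) := by
    exact Finset.disjoint_left.2 fun i hi h2 => (Finset.mem_sdiff.1 hi).2 (Finset.mem_inter.1 h2).2
  have dBA : Disjoint (B \ A) (A ∩ B) := by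
    exact Finset.disjoint_left.2 fun i hi h2 => (Finset.mem_sdiff.1 hi).2 (Finset.mem_inter.1 h2).1
  have dU : Disjoint (A \ B) (B \ A) := by
    exact Finset.disjoint_left.2 fun i hi h2 => (Finset.mem_sdiff.1 h2).2 (Finset.mem_sdiff.1 hi).1
  calc chi A x * chi B x
      = (chi (A \ B) x * chi (A ∩ B) x) * (chi (B \ A) x * chi (A ∩ B) x) := by
        rw [chi, chi]
        nth_rewrite 1 [hA]
        nth_rewrite 3 [hB]
        rw [Finset.prod_union dAB, Finset.prod_union dBA]
        rfl
    _ = chi (A \ B) x * chi (B \ A) x * (chi (A ∩ B) x * chi (A ∩ B) x) := by ring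
    _ = chi ((A \ B) ∪ (B \ A)) x := by
        rw [chi_mul_self, mul_one, chi, chi, chi, ← Finset.prod_union dU]

lemma hcE_chi_mul_chi {d : ℕ} (A B : Finset (Fin d)) :
    hcE (fun x => chi A x * chi B x) = if A = B then 1 else 0 := by
  have : (fun x : Fin d → Bool => chi A x * chi B x) = chi ((A \ B) ∪ (B \ A)) := by
    funext x; exact chi_mul_chi A B x
  rw [this, hcE_chi]
  congr 1
  rw [eq_iff_iff]
  constructor
  · intro h
    have h1 : A \ B = ∅ := by
      rw [← Finset.subset_empty]; intro i hi
      rw [← h]; exact Finset.mem_union_left _ hi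
    have h2 : B \ A = ∅ := by
      rw [← Finset.subset_empty]; intro i hi
      rw [← h]; exact Finset.mem_union_right _ hi
    have := Finset.sdiff_eq_empty_iff_subset.1 h1
    have := Finset.sdiff_eq_empty_iff_subset.1 h2
    exact Finset.Subset.antisymm ‹A ⊆ B› ‹B ⊆ A›
  · rintro rfl; simp

-- Block B: hcE linearity etc.  (appended after a.lean content in final file)
lemma hcE_sum {d : ℕ} {ι : Type*} (s : Finset ι) (f : ι → (Fin d → Bool) → ℝ) :
    hcE (fun x => ∑ i ∈ s, f i x) = ∑ i ∈ s, hcE (f i) := by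
  simp only [hcE, ← Finset.sum_div]
  rw [Finset.sum_comm]

lemma hcE_sub {d : ℕ} (f g : (Fin d → Bool) → ℝ) :
    hcE (fun x => f x - g x) = hcE f - hcE g := by
  simp only [hcE]
  rw [Finset.sum_sub_distrib, sub_div]

lemma hcE_add {d : ℕ} (f g : (Fin d → Bool) → ℝ) :
    hcE (fun x => f x + g x) = hcE f + hcE g := by
  simp only [hcE]
  rw [Finset.sum_add_distrib, add_div]

lemma hcE_const_mul {d : ℕ} (c : ℝ) (f : (Fin d → Bool) → ℝ) :
    hcE (fun x => c * f x) = c * hcE f := by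
  simp only [hcE, ← Finset.mul_sum, mul_div_assoc]

lemma hcE_const {d : ℕ} (c : ℝ) : hcE (fun _ : Fin d → Bool => c) = c := by
  simp only [hcE, Finset.sum_const, Finset.card_univ]
  rw [Fintype.card_fun, nsmul_eq_mul]
  simp only [Fintype.card_fin, Fintype.card_bool]
  push_cast
  rw [mul_comm, mul_div_assoc, div_self (by positivity), mul_one]

lemma hcE_nonneg {d : ℕ} {f : (Fin d → Bool) → ℝ} (h : ∀ x, 0 ≤ f x) : 0 ≤ hcE f := by
  apply div_nonneg _ (by positivity)
  exact Finset.sum_nonneg fun x _ => h x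

lemma hcE_mono {d : ℕ} {f g : (Fin d → Bool) → ℝ} (h : ∀ x, f x ≤ g x) : hcE f ≤ hcE g := by
  simp only [hcE]
  apply div_le_div_of_nonneg_right ?_ (by positivity)
  exact Finset.sum_le_sum fun x _ => h x

lemma hcE_congr {d : ℕ} {f g : (Fin d → Bool) → ℝ} (h : ∀ x, f x = g x) : hcE f = hcE g := by
  congr 1; exact funext h

-- Cauchy-Schwarz for hcE
lemma hcE_mul_sq_le {d : ℕ} (f g : (Fin d → Bool) → ℝ) :
    hcE (fun x => f x * g x) ^ 2 ≤ hcE (fun x => f x ^ 2) * hcE (fun x => g x ^ 2) := by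
  simp only [hcE]
  rw [div_pow, div_mul_div_comm, ← pow_mul, ← pow_add]
  have h2 : d * 2 = d + d := by ring
  rw [h2]
  apply div_le_div_of_nonneg_right ?_ (by positivity)
  exact Finset.sum_mul_sq_le_sq_mul_sq _ _ _

lemma coef_sq_le {d : ℕ} (g : (Fin d → Bool) → ℝ) (A : Finset (Fin d)) :
    fourierCoef g A ^ 2 ≤ hcE (fun x => g x ^ 2) := by
  have := hcE_mul_sq_le g (chi A)
  have hA : hcE (fun x => chi A x ^ 2) = 1 := by
    have : (fun x : Fin d → Bool => chi A x ^ 2) = fun _ => (1:ℝ) := by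
      funext x; rw [sq, chi_mul_self]
    rw [this, hcE_const]
  rw [hA, mul_one] at this
  exact this
-- Block C: inversion, maps, Bessel
lemma chi_delta {P : ℕ} (x y : Fin P → Bool) :
    ∑ S : Finset (Fin P), chi S x * chi S y = if x = y then (2:ℝ) ^ P else 0 := by
  have key : ∑ S : Finset (Fin P), chi S x * chi S y
      = ∏ i : Fin P, (sgn (x i) * sgn (y i) + 1) := by
    rw [Finset.prod_add]
    rw [← Finset.powerset_univ]
    apply Finset.sum_congr rfl
    intro S _
    simp only [Finset.prod_const_one, mul_one]
    rw [chi, chi, ← Finset.prod_mul_distrib]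
  rw [key]
  by_cases h : x = y
  · subst h
    simp only [if_pos rfl]
    rw [Finset.prod_congr rfl (fun i _ => by rw [sgn_mul_self])]
    norm_num [Finset.card_univ]
  · rw [if_neg h]
    obtain ⟨i, hi⟩ : ∃ i, x i ≠ y i := by
      by_contra hc; push_neg at hc; exact h (funext hc)
    apply Finset.prod_eq_zero (Finset.mem_univ i)
    rw [sgn_mul_neg hi]; ring

lemma fourier_inversion {P : ℕ} (h : (Fin P → Bool) → ℝ) (y : Fin P → Bool) :
    ∑ S : Finset (Fin P), fourierCoef h S * chi S y = h y := by
  simp only [fourierCoef, hcE]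
  have step1 : ∀ S : Finset (Fin P), (∑ x : Fin P → Bool, h x * chi S x) / 2 ^ P * chi S y
      = ∑ x : Fin P → Bool, h x * (chi S x * chi S y) / 2 ^ P := by
    intro S
    rw [div_mul_eq_mul_div, Finset.sum_mul, Finset.sum_div]
    apply Finset.sum_congr rfl
    intro x _
    ring
  rw [Finset.sum_congr rfl (fun S _ => step1 S)]
  rw [Finset.sum_comm]
  have step2 : ∀ x : Fin P → Bool,
      ∑ S : Finset (Fin P), h x * (chi S x * chi S y) / 2 ^ P
        = h x * (if x = y then (2:ℝ)^P else 0) / 2 ^ P := by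
    intro x
    rw [← chi_delta x y, Finset.mul_sum, Finset.sum_div]
  rw [Finset.sum_congr rfl (fun x _ => step2 x)]
  rw [Finset.sum_congr rfl (fun x _ => by
    rw [mul_ite, mul_zero] : ∀ x ∈ Finset.univ, h x * (if x = y then (2:ℝ)^P else 0) / 2 ^ P
      = (if x = y then h x * 2^P else 0) / 2 ^ P)]
  simp only [← Finset.sum_div]
  rw [Finset.sum_ite_eq' Finset.univ y (fun x => h x * 2 ^ P)]
  simp only [Finset.mem_univ, if_pos]
  rw [mul_div_assoc, div_self (by positivity), mul_one]

lemma chi_map {P d : ℕ} (hPd : P ≤ d) (S : Finset (Fin P)) (x : Fin d → Bool) :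
    chi (S.map (Fin.castLEEmb hPd)) x = chi S (fun i => x (Fin.castLE hPd i)) := by
  rw [chi, chi, Finset.prod_map]
  rfl

lemma chi_perm {d : ℕ} (σ : Equiv.Perm (Fin d)) (A : Finset (Fin d)) (x : Fin d → Bool) :
    chi A (fun j => x (σ j)) = chi (A.image σ) x := by
  rw [chi, chi, Finset.prod_image]
  intro a _ b _ hab
  exact σ.injective hab

lemma coef_of_sum {d : ℕ} {ι : Type*} (s : Finset ι) (c : ι → ℝ) (A : ι → Finset (Fin d))
    (B : Finset (Fin d)) :
    fourierCoef (fun x => ∑ i ∈ s, c i * chi (A i) x) B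
      = ∑ i ∈ s, c i * (if A i = B then 1 else 0) := by
  rw [fourierCoef]
  have : ∀ x, (∑ i ∈ s, c i * chi (A i) x) * chi B x
      = ∑ i ∈ s, c i * (chi (A i) x * chi B x) := by
    intro x; rw [Finset.sum_mul]; apply Finset.sum_congr rfl; intro i _; ring
  rw [hcE_congr this, hcE_sum]
  apply Finset.sum_congr rfl
  intro i _
  rw [hcE_const_mul, hcE_chi_mul_chi]

lemma bessel {d : ℕ} (β : (Fin d → Bool) → ℝ) (F : Finset (Finset (Fin d))) :
    ∑ A ∈ F, fourierCoef β A ^ 2 ≤ hcE (fun x => β x ^ 2) := by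
  have h0 : 0 ≤ hcE (fun x => (β x - ∑ A ∈ F, fourierCoef β A * chi A x) ^ 2) :=
    hcE_nonneg fun x => sq_nonneg _
  have expand : hcE (fun x => (β x - ∑ A ∈ F, fourierCoef β A * chi A x) ^ 2)
      = hcE (fun x => β x ^ 2) - ∑ A ∈ F, fourierCoef β A ^ 2 := by
    have e1 : ∀ x, (β x - ∑ A ∈ F, fourierCoef β A * chi A x) ^ 2
        = β x ^ 2 - 2 * ((∑ A ∈ F, fourierCoef β A * chi A x) * β x)
          + ∑ A ∈ F, ∑ B ∈ F, (fourierCoef β A * fourierCoef β B) * (chi A x * chi B x) := by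
      intro x
      have hb : (∑ A ∈ F, fourierCoef β A * chi A x) * (∑ B ∈ F, fourierCoef β B * chi B x)
          = ∑ A ∈ F, ∑ B ∈ F, (fourierCoef β A * fourierCoef β B) * (chi A x * chi B x) := by
        rw [Finset.sum_mul]
        refine Finset.sum_congr rfl fun A _ => ?_
        rw [Finset.mul_sum]
        exact Finset.sum_congr rfl fun B _ => by ring
      rw [← hb]
      ring
    rw [hcE_congr e1]
    rw [hcE_add, hcE_sub, hcE_const_mul]
    have e2 : hcE (fun x => (∑ A ∈ F, fourierCoef β A * chi A x) * β x)
        = ∑ A ∈ F, fourierCoef β A ^ 2 := by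
      have : ∀ x, (∑ A ∈ F, fourierCoef β A * chi A x) * β x
          = ∑ A ∈ F, fourierCoef β A * (β x * chi A x) := by
        intro x; rw [Finset.sum_mul]; apply Finset.sum_congr rfl; intro A _; ring
      rw [hcE_congr this, hcE_sum]
      apply Finset.sum_congr rfl
      intro A _
      rw [hcE_const_mul, sq]
      rfl
    have e3 : hcE (fun x => ∑ A ∈ F, ∑ B ∈ F, (fourierCoef β A * fourierCoef β B) * (chi A x * chi B x))
        = ∑ A ∈ F, fourierCoef β A ^ 2 := by
      rw [hcE_sum]
      rw [Finset.sum_congr rfl (fun A hA => by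
        rw [hcE_sum]
        apply Finset.sum_congr rfl
        intro B hB
        rw [hcE_const_mul, hcE_chi_mul_chi] :
        ∀ A ∈ F, hcE (fun x => ∑ B ∈ F, (fourierCoef β A * fourierCoef β B) * (chi A x * chi B x))
          = ∑ B ∈ F, fourierCoef β A * fourierCoef β B * (if A = B then 1 else 0))]
      apply Finset.sum_congr rfl
      intro A hA
      rw [Finset.sum_eq_single A]
      · simp [sq]
      · intro B _ hBA; simp [Ne.symm hBA]
      · intro hAF; exact absurd hA hAF
    rw [e2, e3]
    ring
  linarith [h0, expand.symm.le]
-- Block D: permutation existence and Nat counting lemmas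
lemma exists_perm_map {α : Type*} [DecidableEq α] :
    ∀ (n : ℕ) (W W' : Finset α), W.card = n → W.card = W'.card →
      ∃ σ : Equiv.Perm α, (∀ x, x ∉ W ∪ W' → σ x = x) ∧ W.image σ = W' := by
  intro n
  induction n with
  | zero =>
    intro W W' hW hWW'
    have h1 : W = ∅ := Finset.card_eq_zero.1 hW
    have h2 : W' = ∅ := Finset.card_eq_zero.1 (hWW' ▸ hW)
    subst h1; subst h2
    exact ⟨1, fun x _ => rfl, by simp⟩
  | succ m ih =>
    intro W W' hW hWW'
    obtain ⟨a, ha⟩ : W.Nonempty := Finset.card_pos.1 (by omega)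
    by_cases haW' : a ∈ W'
    · obtain ⟨τ, hτfix, hτim⟩ := ih (W.erase a) (W'.erase a)
        (by rw [Finset.card_erase_of_mem ha]; omega)
        (by rw [Finset.card_erase_of_mem ha, Finset.card_erase_of_mem haW', hWW'])
      refine ⟨τ, fun x hx => hτfix x ?_, ?_⟩
      · intro hmem
        rcases Finset.mem_union.1 hmem with h | h
        · exact hx (Finset.mem_union_left _ (Finset.mem_of_mem_erase h))
        · exact hx (Finset.mem_union_right _ (Finset.mem_of_mem_erase h))
      · have hfixa : τ a = a := by
          apply hτfix
          intro hmem
          rcases Finset.mem_union.1 hmem with h | h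
          · exact (Finset.notMem_erase a W) h
          · exact (Finset.notMem_erase a W') h
        have : W = insert a (W.erase a) := (Finset.insert_erase ha).symm
        rw [this, Finset.image_insert, hτim, hfixa, Finset.insert_erase haW']
    · -- a ∈ W \ W'; pick a' ∈ W' \ W
      have hne : (W' \ W).Nonempty := by
        by_contra hc
        rw [Finset.not_nonempty_iff_eq_empty, Finset.sdiff_eq_empty_iff_subset] at hc
        have : W' ⊂ W := Finset.ssubset_iff_of_subset hc |>.2 ⟨a, ha, haW'⟩
        have := Finset.card_lt_card this
        omega
      obtain ⟨a', ha'⟩ := hne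
      have ha'W' : a' ∈ W' := (Finset.mem_sdiff.1 ha').1
      have ha'W : a' ∉ W := (Finset.mem_sdiff.1 ha').2
      obtain ⟨τ, hτfix, hτim⟩ := ih (W.erase a) (W'.erase a')
        (by rw [Finset.card_erase_of_mem ha]; omega)
        (by rw [Finset.card_erase_of_mem ha, Finset.card_erase_of_mem ha'W', hWW'])
      have hfixa : τ a = a := by
        apply hτfix
        intro hmem
        rcases Finset.mem_union.1 hmem with h | h
        · exact (Finset.notMem_erase a W) h
        · exact haW' (Finset.mem_of_mem_erase h)
      have hfixa' : τ a' = a' := by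
        apply hτfix
        intro hmem
        rcases Finset.mem_union.1 hmem with h | h
        · exact ha'W (Finset.mem_of_mem_erase h)
        · exact (Finset.notMem_erase a' W') h
      refine ⟨τ.trans (Equiv.swap a a'), ?_, ?_⟩
      · intro x hx
        have hxW : x ∉ W := fun h => hx (Finset.mem_union_left _ h)
        have hxW' : x ∉ W' := fun h => hx (Finset.mem_union_right _ h)
        have hτx : τ x = x := by
          apply hτfix
          intro hmem
          rcases Finset.mem_union.1 hmem with h | h
          · exact hxW (Finset.mem_of_mem_erase h)
          · exact hxW' (Finset.mem_of_mem_erase h)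
        simp only [Equiv.trans_apply, hτx]
        apply Equiv.swap_apply_of_ne_of_ne
        · rintro rfl; exact hxW ha
        · rintro rfl; exact hxW' ha'W'
      · have hWsplit : W = insert a (W.erase a) := (Finset.insert_erase ha).symm
        rw [hWsplit, Finset.image_insert]
        have h1 : (Equiv.trans τ (Equiv.swap a a')) a = a' := by
          simp [Equiv.trans_apply, hfixa, Equiv.swap_apply_left]
        rw [h1]
        have h2 : (W.erase a).image (τ.trans (Equiv.swap a a')) = W'.erase a' := by
          have : (W.erase a).image (τ.trans (Equiv.swap a a'))
              = ((W.erase a).image τ).image (Equiv.swap a a') := by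
            rw [Finset.image_image]; rfl
          rw [this, hτim]
          have hfix2 : ∀ y ∈ W'.erase a', Equiv.swap a a' y = y := by
            intro y hy
            apply Equiv.swap_apply_of_ne_of_ne
            · rintro rfl; exact haW' (Finset.mem_of_mem_erase hy)
            · exact Finset.ne_of_mem_erase hy
          rw [Finset.image_congr hfix2]
          exact Finset.image_id
        rw [h2, Finset.insert_erase ha'W']
-- Block E: Nat counting lemmas
lemma df_choose_id : ∀ (r k n : ℕ), r ≤ k → k ≤ n →
    n.descFactorial r * (n - r).choose (k - r) = n.choose k * k.descFactorial r := by
  intro r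
  induction r with
  | zero => simp
  | succ m ih =>
    intro k n hrk hkn
    have hm : m ≤ k := by omega
    have h1 : n.descFactorial (m+1) = (n - m) * n.descFactorial m := Nat.descFactorial_succ n m
    have h2 : k.descFactorial (m+1) = (k - m) * k.descFactorial m := Nat.descFactorial_succ k m
    have hsub : n - m = (n - m - 1) + 1 := by omega
    have hsub2 : k - m = (k - m - 1) + 1 := by omega
    have key := Nat.add_one_mul_choose_eq (n - m - 1) (k - m - 1)
    rw [← hsub, ← hsub2] at key
    have e1 : n - (m+1) = n - m - 1 := by omega
    have e2 : k - (m+1) = k - m - 1 := by omega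
    calc n.descFactorial (m+1) * (n-(m+1)).choose (k-(m+1))
        = n.descFactorial m * ((n - m) * (n-m-1).choose (k-m-1)) := by
          rw [h1, e1, e2]; ring
      _ = n.descFactorial m * ((n-m).choose (k-m) * (k-m)) := by rw [key]
      _ = (n.descFactorial m * (n-m).choose (k-m)) * (k-m) := by ring
      _ = (n.choose k * k.descFactorial m) * (k-m) := by rw [ih k n hm hkn]
      _ = n.choose k * k.descFactorial (m+1) := by rw [h2]; ring

lemma df_le_choose_mul (r k n : ℕ) (hrk : r ≤ k) (hkn : k ≤ n) :
    n.descFactorial r ≤ n.choose k * k.descFactorial r := by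
  have hid := df_choose_id r k n hrk hkn
  have hpos : 1 ≤ (n - r).choose (k - r) := Nat.choose_pos (by omega)
  calc n.descFactorial r = n.descFactorial r * 1 := by ring
    _ ≤ n.descFactorial r * (n - r).choose (k - r) := Nat.mul_le_mul_left _ hpos
    _ = n.choose k * k.descFactorial r := hid

lemma ptwise_ineq (s d P : ℕ) (hsP : s ≤ P) (hd : 2*P ≤ d) :
    d * (P - s) ≤ 2*P*(d - s) := by
  have hsd : s ≤ d := by omega
  zify [hsP, hsd]
  nlinarith [Nat.zero_le s, hsP, hd]

lemma nat_key (r k t d P : ℕ) (hr : 1 ≤ r) (hrk : r ≤ k) (hk : k + t ≤ P) (hd : 2*P ≤ d) :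
    d ^ r ≤ (2*P) ^ r * (d - t).choose k := by
  have hkdt : k ≤ d - t := by omega
  have hDFpos : 0 < k.descFactorial r := by
    have h1 : 1 ≤ (k + 1 - r) ^ r := Nat.one_le_pow _ _ (by omega)
    exact lt_of_lt_of_le (by omega) (Nat.pow_sub_le_descFactorial k r)
  have step1 : d ^ r * k.descFactorial r ≤ (2*P) ^ r * (d - t).descFactorial r := by
    rw [Nat.descFactorial_eq_prod_range, Nat.descFactorial_eq_prod_range]
    have hd1 : d ^ r = ∏ _i ∈ Finset.range r, d := by simp
    have hP1 : (2*P) ^ r = ∏ _i ∈ Finset.range r, 2*P := by simp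
    rw [hd1, hP1, ← Finset.prod_mul_distrib, ← Finset.prod_mul_distrib]
    apply Finset.prod_le_prod'
    intro j hj
    have hjr : j < r := Finset.mem_range.1 hj
    have h1 : k - j ≤ P - (t + j) := by omega
    have h2 : d - t - j = d - (t + j) := by omega
    calc d * (k - j) ≤ d * (P - (t + j)) := Nat.mul_le_mul_left _ h1
      _ ≤ 2*P*(d - (t+j)) := ptwise_ineq (t+j) d P (by omega) hd
      _ = 2*P*(d - t - j) := by rw [h2]
  have step2 : (d - t).descFactorial r ≤ (d-t).choose k * k.descFactorial r :=
    df_le_choose_mul r k (d - t) hrk hkdt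
  have : d ^ r * k.descFactorial r ≤ ((2*P) ^ r * (d-t).choose k) * k.descFactorial r := by
    calc d ^ r * k.descFactorial r ≤ (2*P) ^ r * (d - t).descFactorial r := step1
      _ ≤ (2*P) ^ r * ((d-t).choose k * k.descFactorial r) := Nat.mul_le_mul_left _ step2
      _ = ((2*P) ^ r * (d-t).choose k) * k.descFactorial r := by ring
  exact Nat.le_of_mul_le_mul_right this hDFpos
-- Block F: the per-S counting bound
lemma mem_G_mul {P d : ℕ} (hPd : P ≤ d) (T : Finset (Fin P)) (σ τ : Equiv.Perm (Fin d))
    (hσ : ∀ i ∈ T, σ (Fin.castLE hPd i) = Fin.castLE hPd i)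
    (hτ : ∀ i ∈ T, τ (Fin.castLE hPd i) = Fin.castLE hPd i) :
    ∀ i ∈ T, (σ * τ) (Fin.castLE hPd i) = Fin.castLE hPd i := by
  intro i hi
  rw [Equiv.Perm.mul_apply, hτ i hi, hσ i hi]

lemma mem_G_inv {P d : ℕ} (hPd : P ≤ d) (T : Finset (Fin P)) (σ : Equiv.Perm (Fin d))
    (hσ : ∀ i ∈ T, σ (Fin.castLE hPd i) = Fin.castLE hPd i) :
    ∀ i ∈ T, σ⁻¹ (Fin.castLE hPd i) = Fin.castLE hPd i := by
  intro i hi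
  conv_lhs => rw [← hσ i hi]
  exact σ.symm_apply_apply _

/-- fibers of `σ ↦ A0.image σ` all have the same cardinality -/
lemma fiber_card_eq {P d : ℕ} (hPd : P ≤ d) (T : Finset (Fin P)) (A0 : Finset (Fin d))
    (A B : Finset (Fin d))
    (hA : A ∈ Finset.image (fun σ : {σ : Equiv.Perm (Fin d) //
        ∀ i ∈ T, σ (Fin.castLE hPd i) = Fin.castLE hPd i} => A0.image σ.1) Finset.univ)
    (hB : B ∈ Finset.image (fun σ : {σ : Equiv.Perm (Fin d) //
        ∀ i ∈ T, σ (Fin.castLE hPd i) = Fin.castLE hPd i} => A0.image σ.1) Finset.univ) :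
    (Finset.univ.filter (fun σ : {σ : Equiv.Perm (Fin d) //
        ∀ i ∈ T, σ (Fin.castLE hPd i) = Fin.castLE hPd i} => A0.image σ.1 = A)).card
      = (Finset.univ.filter (fun σ : {σ : Equiv.Perm (Fin d) //
        ∀ i ∈ T, σ (Fin.castLE hPd i) = Fin.castLE hPd i} => A0.image σ.1 = B)).card := by
  obtain ⟨σA, -, hσA⟩ := Finset.mem_image.1 hA
  obtain ⟨σB, -, hσB⟩ := Finset.mem_image.1 hB
  have main : ∀ (σC σD : {σ : Equiv.Perm (Fin d) //
        ∀ i ∈ T, σ (Fin.castLE hPd i) = Fin.castLE hPd i}) (C D : Finset (Fin d)),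
      A0.image σC.1 = C → A0.image σD.1 = D →
      ∀ σ : {σ : Equiv.Perm (Fin d) //
        ∀ i ∈ T, σ (Fin.castLE hPd i) = Fin.castLE hPd i}, A0.image σ.1 = C →
        A0.image ((σD.1 * σC.1⁻¹ * σ.1)) = D := by
    intro σC σD C D hC hD σ hσ
    have h1 : Finset.image (⇑(σD.1 * σC.1⁻¹ * σ.1)) A0
        = ((A0.image ⇑σ.1).image ⇑(σC.1⁻¹)).image ⇑σD.1 := by
      rw [Finset.image_image, Finset.image_image]
      rfl
    rw [h1, hσ, ← hC]
    have h2 : Finset.image (⇑(σC.1⁻¹)) (Finset.image (⇑σC.1) A0) = A0 := by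
      rw [Finset.image_image]
      have h3 : ∀ y ∈ A0, (⇑(σC.1⁻¹) ∘ ⇑σC.1) y = y := fun y _ => σC.1.symm_apply_apply y
      rw [Finset.image_congr h3]
      exact Finset.image_id
    rw [h2, hD]
  refine Finset.card_bij' (fun σ _ => (⟨σB.1 * σA.1⁻¹ * σ.1,
      mem_G_mul hPd T _ _ (mem_G_mul hPd T _ _ σB.2 (mem_G_inv hPd T _ σA.2)) σ.2⟩))
    (fun σ _ => (⟨σA.1 * σB.1⁻¹ * σ.1,
      mem_G_mul hPd T _ _ (mem_G_mul hPd T _ _ σA.2 (mem_G_inv hPd T _ σB.2)) σ.2⟩))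
    ?_ ?_ ?_ ?_
  · intro σ hσ
    simp only [Finset.mem_filter, Finset.mem_univ, true_and] at hσ ⊢
    exact main σA σB A B hσA hσB σ hσ
  · intro σ hσ
    simp only [Finset.mem_filter, Finset.mem_univ, true_and] at hσ ⊢
    exact main σB σA B A hσB hσA σ hσ
  · intro σ hσ
    apply Subtype.ext
    simp only []
    group
  · intro σ hσ
    apply Subtype.ext
    simp only []
    group
-- Block G: per-S bound
lemma perS_bound {P : ℕ} (l : ℕ) {d : ℕ} (hPd : P ≤ d) (hd : 2 * P ≤ d)
    (T : Finset (Fin P)) (S : Finset (Fin P)) (hcard : l + 1 ≤ (S \ T).card)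
    (β : (Fin d → Bool) → ℝ) :
    ∑ σ : {σ : Equiv.Perm (Fin d) // ∀ i ∈ T, σ (Fin.castLE hPd i) = Fin.castLE hPd i},
        fourierCoef β ((S.map (Fin.castLEEmb hPd)).image σ.1) ^ 2
      ≤ (2 * (P:ℝ)) ^ (l+1) / (d:ℝ) ^ (l+1) *
          (Fintype.card {σ : Equiv.Perm (Fin d) //
            ∀ i ∈ T, σ (Fin.castLE hPd i) = Fin.castLE hPd i} : ℝ) *
          hcE (fun x => β x ^ 2) := by
  classical
  set r := l + 1 with hr
  set k := (S \ T).card with hk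
  set t := T.card with ht
  have hktP : k + t ≤ P := by
    have hdisj : Disjoint (S \ T) T := Finset.sdiff_disjoint
    have := Finset.card_union_of_disjoint hdisj
    have hle : (S \ T ∪ T).card ≤ Fintype.card (Fin P) := Finset.card_le_univ _
    rw [Fintype.card_fin] at hle
    omega
  have hdpos : 0 < d := by omega
  -- notation
  set Temb := T.map (Fin.castLEEmb hPd) with hTemb
  set Sin := (S ∩ T).map (Fin.castLEEmb hPd) with hSin
  set Sout := (S \ T).map (Fin.castLEEmb hPd) with hSout
  set D := (Finset.univ : Finset (Fin d)) \ Temb with hD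
  have hSoutD : Sout ⊆ D := by
    intro y hy
    obtain ⟨i, hi, rfl⟩ := Finset.mem_map.1 hy
    rw [hD, Finset.mem_sdiff]
    refine ⟨Finset.mem_univ _, fun hmem => ?_⟩
    obtain ⟨j, hj, hji⟩ := Finset.mem_map.1 hmem
    have : j = i := (Fin.castLEEmb hPd).injective hji
    subst this
    exact (Finset.mem_sdiff.1 hi).2 hj
  have hSinT : Sin ⊆ Temb := Finset.map_subset_map.2 Finset.inter_subset_right
  have hA0 : S.map (Fin.castLEEmb hPd) = Sin ∪ Sout := by
    rw [hSin, hSout, ← Finset.map_union]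
    congr 1
    exact (sup_inf_sdiff S T).symm
  have hone : ∀ i ∈ T, (1 : Equiv.Perm (Fin d)) (Fin.castLE hPd i) = Fin.castLE hPd i :=
    fun i _ => rfl
  set Φ := fun σ : {σ : Equiv.Perm (Fin d) //
      ∀ i ∈ T, σ (Fin.castLE hPd i) = Fin.castLE hPd i} =>
      (S.map (Fin.castLEEmb hPd)).image σ.1 with hΦ
  set I := Finset.image Φ Finset.univ with hI
  set N := Fintype.card {σ : Equiv.Perm (Fin d) //
      ∀ i ∈ T, σ (Fin.castLE hPd i) = Fin.castLE hPd i} with hN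
  have hNpos : 0 < N := Fintype.card_pos_iff.2 ⟨⟨1, hone⟩⟩
  -- fibers
  have hfib : ∀ A ∈ I, (Finset.univ.filter (fun σ => Φ σ = A)).card * I.card = N := by
    intro A hA
    have hN2 : N = ∑ A' ∈ I, (Finset.univ.filter (fun σ => Φ σ = A')).card := by
      rw [hN, ← Finset.card_univ]
      exact Finset.card_eq_sum_card_fiberwise
        (fun σ _ => Finset.mem_image_of_mem Φ (Finset.mem_univ σ))
    rw [hN2, Finset.sum_congr rfl (fun A' hA' => fiber_card_eq hPd T _ A' A hA' hA),
      Finset.sum_const, smul_eq_mul, mul_comm]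
  -- D card
  have hDcard : D.card = d - t := by
    rw [hD, Finset.card_sdiff_of_subset (Finset.subset_univ _), Finset.card_univ, Fintype.card_fin,
      hTemb, Finset.card_map]
  -- injection from powersetCard
  have hIcard : (d - t).choose k ≤ I.card := by
    rw [← hDcard, ← Finset.card_powersetCard]
    apply Finset.card_le_card_of_injOn (fun W => Sin ∪ W)
    · intro W hW
      rw [Finset.mem_coe, Finset.mem_powersetCard] at hW
      obtain ⟨hWD, hWk⟩ := hW
      obtain ⟨σ, hσfix, hσim⟩ := exists_perm_map k Sout W
        (by rw [hSout, Finset.card_map]) (by rw [hSout, Finset.card_map, hWk])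
      have hmemG : ∀ i ∈ T, σ (Fin.castLE hPd i) = Fin.castLE hPd i := by
        intro i hi
        apply hσfix
        intro hmem
        have hTembmem : Fin.castLE hPd i ∈ Temb := by
          rw [hTemb]
          exact Finset.mem_map_of_mem _ hi
        rcases Finset.mem_union.1 hmem with h | h
        · exact (Finset.mem_sdiff.1 (hSoutD h)).2 hTembmem
        · exact (Finset.mem_sdiff.1 (hWD h)).2 hTembmem
      have hΦval : Φ ⟨σ, hmemG⟩ = Sin ∪ W := by
        rw [hΦ]
        simp only []
        rw [hA0, Finset.image_union, hσim]
        congr 1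
        have hfixSin : ∀ y ∈ Sin, σ y = y := by
          intro y hy
          apply hσfix
          intro hmem
          have hyT : y ∈ Temb := hSinT hy
          rcases Finset.mem_union.1 hmem with h | h
          · exact (Finset.mem_sdiff.1 (hSoutD h)).2 hyT
          · exact (Finset.mem_sdiff.1 (hWD h)).2 hyT
        rw [Finset.image_congr hfixSin]
        exact Finset.image_id
      exact Finset.mem_image.2 ⟨⟨σ, hmemG⟩, Finset.mem_univ _, hΦval⟩
    · intro W hW W' hW' hWW'
      rw [Finset.mem_coe, Finset.mem_powersetCard] at hW hW'
      have hrec : ∀ V : Finset (Fin d), V ⊆ D → (Sin ∪ V) \ Temb = V := by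
        intro V hVD
        ext y
        rw [Finset.mem_sdiff, Finset.mem_union]
        constructor
        · rintro ⟨hy1 | hy1, hy2⟩
          · exact absurd (hSinT hy1) hy2
          · exact hy1
        · intro hy
          exact ⟨Or.inr hy, (Finset.mem_sdiff.1 (hVD hy)).2⟩
      have h' : Sin ∪ W = Sin ∪ W' := hWW'
      calc W = (Sin ∪ W) \ Temb := (hrec W hW.1).symm
        _ = (Sin ∪ W') \ Temb := by rw [h']
        _ = W' := hrec W' hW'.1
  have hIpos : 0 < I.card := by
    apply Finset.card_pos.2
    exact ⟨Φ ⟨1, hone⟩, Finset.mem_image_of_mem Φ (Finset.mem_univ _)⟩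
  -- real fiber bound
  have hkey : (d:ℝ) ^ r ≤ (2*(P:ℝ)) ^ r * I.card := by
    have hnat : d ^ r ≤ (2*P) ^ r * I.card := by
      calc d ^ r ≤ (2*P) ^ r * (d - t).choose k :=
            nat_key r k t d P (by omega) hcard hktP hd
        _ ≤ (2*P) ^ r * I.card := Nat.mul_le_mul_left _ hIcard
    calc (d:ℝ) ^ r = ((d ^ r : ℕ) : ℝ) := by push_cast; ring
      _ ≤ (((2*P) ^ r * I.card : ℕ) : ℝ) := Nat.cast_le.2 hnat
      _ = (2*(P:ℝ)) ^ r * I.card := by push_cast; ring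
  have hfibR : ∀ A ∈ I, ((Finset.univ.filter (fun σ => Φ σ = A)).card : ℝ)
      ≤ (2*(P:ℝ)) ^ r / (d:ℝ) ^ r * N := by
    intro A hA
    have h1 : ((Finset.univ.filter (fun σ => Φ σ = A)).card : ℝ) * I.card = N := by
      exact_mod_cast congrArg (Nat.cast : ℕ → ℝ) (hfib A hA)
    have hdr : (0:ℝ) < (d:ℝ) ^ r := by positivity
    rw [div_mul_eq_mul_div, le_div_iff₀ hdr]
    calc ((Finset.univ.filter (fun σ => Φ σ = A)).card : ℝ) * (d:ℝ) ^ r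
        ≤ ((Finset.univ.filter (fun σ => Φ σ = A)).card : ℝ) * ((2*(P:ℝ)) ^ r * I.card) :=
          mul_le_mul_of_nonneg_left hkey (Nat.cast_nonneg _)
      _ = (2*(P:ℝ)) ^ r * (((Finset.univ.filter (fun σ => Φ σ = A)).card : ℝ) * I.card) := by
          ring
      _ = (2*(P:ℝ)) ^ r * N := by rw [h1]
  -- main chain
  have hsum : ∑ σ : {σ : Equiv.Perm (Fin d) //
        ∀ i ∈ T, σ (Fin.castLE hPd i) = Fin.castLE hPd i},
      fourierCoef β (Φ σ) ^ 2
      = ∑ A ∈ I, ((Finset.univ.filter (fun σ => Φ σ = A)).card : ℝ) * fourierCoef β A ^ 2 := by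
    rw [Finset.sum_comp (fun A => fourierCoef β A ^ 2) Φ]
    exact Finset.sum_congr rfl fun A _ => by rw [nsmul_eq_mul]
  calc ∑ σ : {σ : Equiv.Perm (Fin d) //
        ∀ i ∈ T, σ (Fin.castLE hPd i) = Fin.castLE hPd i},
      fourierCoef β ((S.map (Fin.castLEEmb hPd)).image σ.1) ^ 2
      = ∑ A ∈ I, ((Finset.univ.filter (fun σ => Φ σ = A)).card : ℝ) * fourierCoef β A ^ 2 :=
        hsum
    _ ≤ ∑ A ∈ I, ((2*(P:ℝ)) ^ r / (d:ℝ) ^ r * N) * fourierCoef β A ^ 2 := by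
        apply Finset.sum_le_sum
        intro A hA
        exact mul_le_mul_of_nonneg_right (hfibR A hA) (sq_nonneg _)
    _ = ((2*(P:ℝ)) ^ r / (d:ℝ) ^ r * N) * ∑ A ∈ I, fourierCoef β A ^ 2 := by
        rw [Finset.mul_sum]
    _ ≤ ((2*(P:ℝ)) ^ r / (d:ℝ) ^ r * N) * hcE (fun x => β x ^ 2) := by
        apply mul_le_mul_of_nonneg_left (bessel β I)
        positivity

/-- **Core of Theorem 3.6 (non-`l`-MSP functions have small alignment after subtracting
the reachable part).** Here `f*(x) = h*(x_1,…,x_P)`, `α = Σ_{S ⊆ T} ĥ*(S) χ_S`, and `σ`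
is uniform over the permutations of `[d]` fixing every element of (the embedded copy
of) `T`. Part (i): `‖f* − α‖² ≥ min{ĥ*(S)² : ĥ*(S) ≠ 0} > 0`; part (ii): for every `β`,
`E_σ[⟨(f*−α)∘σ, β⟩²] ≤ 2^P (2P)^{l+1} (Σ_{S∈𝒮^{⊄T}} ĥ*(S)²) ‖β‖² / d^{l+1}`. -/
theorem stmt_16 {P : ℕ} (hP : 1 ≤ P) (l : ℕ) (hl : 1 ≤ l)
    (hstar : (Fin P → Bool) → ℝ) (T : Finset (Fin P))
    -- `𝒮^{⊄T}` is nonempty and every `S ∈ 𝒮^{⊄T}` has `|S∖T| ≥ l+1`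
    (hTne : ∃ S : Finset (Fin P), fourierCoef hstar S ≠ 0 ∧ ¬ S ⊆ T)
    (hTleap : ∀ S : Finset (Fin P), fourierCoef hstar S ≠ 0 → ¬ S ⊆ T →
      l + 1 ≤ (S \ T).card)
    (d : ℕ) (hd : 2 * P ≤ d) (hPd : P ≤ d) :
    (0 < sInf {r : ℝ | ∃ S : Finset (Fin P), fourierCoef hstar S ≠ 0 ∧
          r = fourierCoef hstar S ^ 2}
      ∧ sInf {r : ℝ | ∃ S : Finset (Fin P), fourierCoef hstar S ≠ 0 ∧
          r = fourierCoef hstar S ^ 2}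
        ≤ hcE (fun x : Fin d → Bool =>
            (hstar (fun i => x (Fin.castLE hPd i))
              - ∑ S ∈ T.powerset,
                  fourierCoef hstar S * chi (S.map (Fin.castLEEmb hPd)) x) ^ 2))
    ∧ ∀ β : (Fin d → Bool) → ℝ,
      (∑ σ : {σ : Equiv.Perm (Fin d) // ∀ i ∈ T, σ (Fin.castLE hPd i) = Fin.castLE hPd i},
          (hcE fun x : Fin d → Bool =>
            (hstar (fun i => (fun j => x (σ.1 j)) (Fin.castLE hPd i))
              - ∑ S ∈ T.powerset,
                  fourierCoef hstar S * chi (S.map (Fin.castLEEmb hPd)) (fun j => x (σ.1 j)))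
            * β x) ^ 2)
        / (Fintype.card
            {σ : Equiv.Perm (Fin d) // ∀ i ∈ T, σ (Fin.castLE hPd i) = Fin.castLE hPd i} : ℝ)
      ≤ 2 ^ P * (2 * (P : ℝ)) ^ (l + 1) *
          (∑ S ∈ Finset.univ.filter
              (fun S : Finset (Fin P) => fourierCoef hstar S ≠ 0 ∧ ¬ S ⊆ T),
            fourierCoef hstar S ^ 2)
          * hcE (fun x => β x ^ 2) / (d : ℝ) ^ (l + 1) := by
  classical
  obtain ⟨S₀, hS₀c, hS₀T⟩ := hTne
  set F := Finset.univ.filter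
      (fun S : Finset (Fin P) => fourierCoef hstar S ≠ 0 ∧ ¬ S ⊆ T) with hF
  have hS₀F : S₀ ∈ F := by
    rw [hF]; exact Finset.mem_filter.2 ⟨Finset.mem_univ _, hS₀c, hS₀T⟩
  have gexp : ∀ z : Fin d → Bool,
      hstar (fun i => z (Fin.castLE hPd i))
        - ∑ S ∈ T.powerset, fourierCoef hstar S * chi (S.map (Fin.castLEEmb hPd)) z
      = ∑ S ∈ F, fourierCoef hstar S * chi (S.map (Fin.castLEEmb hPd)) z := by
    intro z
    have hinv := fourier_inversion hstar (fun i => z (Fin.castLE hPd i))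
    rw [Finset.sum_congr rfl (fun S _ => by rw [← chi_map hPd S z] :
      ∀ S ∈ Finset.univ, fourierCoef hstar S * chi S (fun i => z (Fin.castLE hPd i))
        = fourierCoef hstar S * chi (S.map (Fin.castLEEmb hPd)) z)] at hinv
    have hsplit := Finset.sum_sdiff (f := fun S : Finset (Fin P) =>
      fourierCoef hstar S * chi (S.map (Fin.castLEEmb hPd)) z)
      (Finset.subset_univ T.powerset)
    have hFsub : ∑ S ∈ Finset.univ \ T.powerset,
        fourierCoef hstar S * chi (S.map (Fin.castLEEmb hPd)) z
        = ∑ S ∈ F, fourierCoef hstar S * chi (S.map (Fin.castLEEmb hPd)) z := by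
      symm
      apply Finset.sum_subset
      · intro S hS
        rw [hF] at hS
        obtain ⟨-, -, h2⟩ := Finset.mem_filter.1 hS
        exact Finset.mem_sdiff.2 ⟨Finset.mem_univ _, fun hmem => h2 (Finset.mem_powerset.1 hmem)⟩
      · intro S hS hSF
        have hz : fourierCoef hstar S = 0 := by
          by_contra hc
          apply hSF
          rw [hF]
          refine Finset.mem_filter.2 ⟨Finset.mem_univ _, hc, fun hsub => ?_⟩
          exact (Finset.mem_sdiff.1 hS).2 (Finset.mem_powerset.2 hsub)
        rw [hz, zero_mul]
    rw [← hinv, ← hsplit, hFsub]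
    ring
  refine ⟨?_, ?_⟩
  · -- Part (i)
    set M := {r : ℝ | ∃ S : Finset (Fin P), fourierCoef hstar S ≠ 0 ∧
        r = fourierCoef hstar S ^ 2} with hM
    have hMne : M.Nonempty := ⟨_, S₀, hS₀c, rfl⟩
    have hMfin : M.Finite := by
      apply Set.Finite.subset
        (Set.finite_range (fun S : Finset (Fin P) => fourierCoef hstar S ^ 2))
      rintro r ⟨S, -, rfl⟩
      exact ⟨S, rfl⟩
    have hbdd : BddBelow M := ⟨0, by rintro r ⟨S, -, rfl⟩; positivity⟩
    refine ⟨?_, ?_⟩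
    · obtain ⟨S₁, hS₁, hEq⟩ := hMne.csInf_mem hMfin
      rw [hEq]
      exact lt_of_le_of_ne (sq_nonneg _) (Ne.symm (pow_ne_zero 2 hS₁))
    · have h1 : sInf M ≤ fourierCoef hstar S₀ ^ 2 := csInf_le hbdd ⟨S₀, hS₀c, rfl⟩
      have hg : hcE (fun x : Fin d → Bool =>
          (hstar (fun i => x (Fin.castLE hPd i))
            - ∑ S ∈ T.powerset,
                fourierCoef hstar S * chi (S.map (Fin.castLEEmb hPd)) x) ^ 2)
          = hcE (fun x : Fin d → Bool =>
            (∑ S ∈ F, fourierCoef hstar S * chi (S.map (Fin.castLEEmb hPd)) x) ^ 2) :=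
        hcE_congr (fun x => by rw [gexp x])
      rw [hg]
      have hco : fourierCoef
          (fun x : Fin d → Bool =>
            ∑ S ∈ F, fourierCoef hstar S * chi (S.map (Fin.castLEEmb hPd)) x)
          (S₀.map (Fin.castLEEmb hPd)) = fourierCoef hstar S₀ := by
        rw [coef_of_sum]
        rw [Finset.sum_eq_single S₀]
        · rw [if_pos rfl, mul_one]
        · intro S _ hne
          rw [if_neg fun heq => hne (Finset.map_injective _ heq), mul_zero]
        · intro h; exact absurd hS₀F h
      calc sInf M ≤ fourierCoef hstar S₀ ^ 2 := h1
        _ = fourierCoef (fun x : Fin d → Bool =>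
              ∑ S ∈ F, fourierCoef hstar S * chi (S.map (Fin.castLEEmb hPd)) x)
              (S₀.map (Fin.castLEEmb hPd)) ^ 2 := by rw [hco]
        _ ≤ hcE (fun x : Fin d → Bool =>
              (∑ S ∈ F, fourierCoef hstar S * chi (S.map (Fin.castLEEmb hPd)) x) ^ 2) :=
            coef_sq_le _ _
  · -- Part (ii)
    intro β
    have hone : ∀ i ∈ T, (1 : Equiv.Perm (Fin d)) (Fin.castLE hPd i) = Fin.castLE hPd i :=
      fun i _ => rfl
    have hNpos : 0 < Fintype.card {σ : Equiv.Perm (Fin d) //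
        ∀ i ∈ T, σ (Fin.castLE hPd i) = Fin.castLE hPd i} :=
      Fintype.card_pos_iff.2 ⟨⟨1, hone⟩⟩
    have hNposR : (0:ℝ) < (Fintype.card {σ : Equiv.Perm (Fin d) //
        ∀ i ∈ T, σ (Fin.castLE hPd i) = Fin.castLE hPd i} : ℝ) := by
      exact_mod_cast hNpos
    have hβnn : 0 ≤ hcE (fun x : Fin d → Bool => β x ^ 2) := hcE_nonneg fun x => sq_nonneg _
    have hc2nn : 0 ≤ ∑ S ∈ F, fourierCoef hstar S ^ 2 :=
      Finset.sum_nonneg fun S _ => sq_nonneg _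
    have hinner : ∀ σ : {σ : Equiv.Perm (Fin d) //
        ∀ i ∈ T, σ (Fin.castLE hPd i) = Fin.castLE hPd i},
        (hcE fun x : Fin d → Bool =>
            (hstar (fun i => (fun j => x (σ.1 j)) (Fin.castLE hPd i))
              - ∑ S ∈ T.powerset,
                  fourierCoef hstar S * chi (S.map (Fin.castLEEmb hPd)) (fun j => x (σ.1 j)))
            * β x)
        = ∑ S ∈ F, fourierCoef hstar S
            * fourierCoef β ((S.map (Fin.castLEEmb hPd)).image σ.1) := by
      intro σ
      have hpt : ∀ x : Fin d → Bool,
          (hstar (fun i => (fun j => x (σ.1 j)) (Fin.castLE hPd i))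
              - ∑ S ∈ T.powerset,
                  fourierCoef hstar S * chi (S.map (Fin.castLEEmb hPd)) (fun j => x (σ.1 j)))
            * β x
          = ∑ S ∈ F, fourierCoef hstar S
              * (β x * chi ((S.map (Fin.castLEEmb hPd)).image σ.1) x) := by
        intro x
        rw [gexp (fun j => x (σ.1 j)), Finset.sum_mul]
        apply Finset.sum_congr rfl
        intro S _
        rw [chi_perm σ.1 (S.map (Fin.castLEEmb hPd)) x]
        ring
      rw [hcE_congr hpt, hcE_sum]
      exact Finset.sum_congr rfl fun S _ => by rw [hcE_const_mul]; rfl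
    rw [div_le_iff₀ hNposR]
    have hperS : ∀ S ∈ F,
        ∑ σ : {σ : Equiv.Perm (Fin d) //
            ∀ i ∈ T, σ (Fin.castLE hPd i) = Fin.castLE hPd i},
          fourierCoef β ((S.map (Fin.castLEEmb hPd)).image σ.1) ^ 2
        ≤ (2 * (P:ℝ)) ^ (l+1) / (d:ℝ) ^ (l+1) *
            (Fintype.card {σ : Equiv.Perm (Fin d) //
              ∀ i ∈ T, σ (Fin.castLE hPd i) = Fin.castLE hPd i} : ℝ) *
            hcE (fun x => β x ^ 2) := by
      intro S hS
      rw [hF] at hS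
      obtain ⟨-, h1, h2⟩ := Finset.mem_filter.1 hS
      exact perS_bound l hPd hd T S (hTleap S h1 h2) β
    have hFcard : (F.card : ℝ) ≤ 2 ^ P := by
      have hn : F.card ≤ 2 ^ P := by
        calc F.card ≤ (Finset.univ : Finset (Finset (Fin P))).card :=
              Finset.card_le_card (Finset.filter_subset _ _)
          _ = 2 ^ P := by rw [Finset.card_univ, Fintype.card_finset, Fintype.card_fin]
      calc (F.card : ℝ) ≤ ((2 ^ P : ℕ) : ℝ) := Nat.cast_le.2 hn
        _ = 2 ^ P := by push_cast; ring
    calc ∑ σ : {σ : Equiv.Perm (Fin d) //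
          ∀ i ∈ T, σ (Fin.castLE hPd i) = Fin.castLE hPd i},
        (hcE fun x : Fin d → Bool =>
          (hstar (fun i => (fun j => x (σ.1 j)) (Fin.castLE hPd i))
            - ∑ S ∈ T.powerset,
                fourierCoef hstar S * chi (S.map (Fin.castLEEmb hPd)) (fun j => x (σ.1 j)))
          * β x) ^ 2
        = ∑ σ : {σ : Equiv.Perm (Fin d) //
            ∀ i ∈ T, σ (Fin.castLE hPd i) = Fin.castLE hPd i},
          (∑ S ∈ F, fourierCoef hstar S
            * fourierCoef β ((S.map (Fin.castLEEmb hPd)).image σ.1)) ^ 2 := by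
          exact Finset.sum_congr rfl fun σ _ => by rw [hinner σ]
      _ ≤ ∑ σ : {σ : Equiv.Perm (Fin d) //
            ∀ i ∈ T, σ (Fin.castLE hPd i) = Fin.castLE hPd i},
          (∑ S ∈ F, fourierCoef hstar S ^ 2)
            * ∑ S ∈ F, fourierCoef β ((S.map (Fin.castLEEmb hPd)).image σ.1) ^ 2 := by
          apply Finset.sum_le_sum
          intro σ _
          exact Finset.sum_mul_sq_le_sq_mul_sq F _ _
      _ = (∑ S ∈ F, fourierCoef hstar S ^ 2)
            * ∑ σ : {σ : Equiv.Perm (Fin d) //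
                ∀ i ∈ T, σ (Fin.castLE hPd i) = Fin.castLE hPd i},
              ∑ S ∈ F, fourierCoef β ((S.map (Fin.castLEEmb hPd)).image σ.1) ^ 2 := by
          rw [Finset.mul_sum]
      _ = (∑ S ∈ F, fourierCoef hstar S ^ 2)
            * ∑ S ∈ F, ∑ σ : {σ : Equiv.Perm (Fin d) //
                ∀ i ∈ T, σ (Fin.castLE hPd i) = Fin.castLE hPd i},
              fourierCoef β ((S.map (Fin.castLEEmb hPd)).image σ.1) ^ 2 := by
          rw [Finset.sum_comm]
      _ ≤ (∑ S ∈ F, fourierCoef hstar S ^ 2)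
            * ∑ S ∈ F, ((2 * (P:ℝ)) ^ (l+1) / (d:ℝ) ^ (l+1) *
                (Fintype.card {σ : Equiv.Perm (Fin d) //
                  ∀ i ∈ T, σ (Fin.castLE hPd i) = Fin.castLE hPd i} : ℝ) *
                hcE (fun x => β x ^ 2)) :=
          mul_le_mul_of_nonneg_left (Finset.sum_le_sum hperS) hc2nn
      _ = (∑ S ∈ F, fourierCoef hstar S ^ 2)
            * ((F.card : ℝ) * ((2 * (P:ℝ)) ^ (l+1) / (d:ℝ) ^ (l+1) *
                (Fintype.card {σ : Equiv.Perm (Fin d) //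
                  ∀ i ∈ T, σ (Fin.castLE hPd i) = Fin.castLE hPd i} : ℝ) *
                hcE (fun x => β x ^ 2))) := by
          rw [Finset.sum_const, nsmul_eq_mul]
      _ ≤ (∑ S ∈ F, fourierCoef hstar S ^ 2)
            * ((2:ℝ) ^ P * ((2 * (P:ℝ)) ^ (l+1) / (d:ℝ) ^ (l+1) *
                (Fintype.card {σ : Equiv.Perm (Fin d) //
                  ∀ i ∈ T, σ (Fin.castLE hPd i) = Fin.castLE hPd i} : ℝ) *
                hcE (fun x => β x ^ 2))) := by
          apply mul_le_mul_of_nonneg_left ?_ hc2nn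
          apply mul_le_mul_of_nonneg_right hFcard
          have : (0:ℝ) ≤ (2 * (P:ℝ)) ^ (l+1) / (d:ℝ) ^ (l+1) *
              (Fintype.card {σ : Equiv.Perm (Fin d) //
                ∀ i ∈ T, σ (Fin.castLE hPd i) = Fin.castLE hPd i} : ℝ) := by positivity
          exact mul_nonneg this hβnn
      _ = 2 ^ P * (2 * (P : ℝ)) ^ (l + 1) *
          (∑ S ∈ F, fourierCoef hstar S ^ 2)
          * hcE (fun x => β x ^ 2) / (d : ℝ) ^ (l + 1)
          * (Fintype.card {σ : Equiv.Perm (Fin d) //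
              ∀ i ∈ T, σ (Fin.castLE hPd i) = Fin.castLE hPd i} : ℝ) := by
          ring

end
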